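/- arXiv:0807.2526 — 4 statements merged into one kernel-verified Lean document; each statement's English description precedes it below -/
import Mathlib

section
/- Let D ⊆ ℝⁿ be a polyhedral convex set containing 0. Then the positive hull ⋃_{α>0} αD is closed (so the closure operation in the definition of the tangent cone of D at 0 is superfluous). -/
open scoped Pointwise RealInnerProductSpace

/-- The positive hull `⋃_{α>0} αD` of a polyhedral convex set `D ⊆ ℝⁿ`
containing `0` (a finite intersection of closed half-spaces) is closed. -/
theorem stmt_7 (n m : ℕ) (v : Fin m → EuclideanSpace ℝ (Fin n)) (b : Fin m → ℝ)
    (D : Set (EuclideanSpace ℝ (Fin n)))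
    (hD : D = ⋂ i : Fin m, {x : EuclideanSpace ℝ (Fin n) | ⟪v i, x⟫ ≤ b i})
    (h0 : (0 : EuclideanSpace ℝ (Fin n)) ∈ D) :
    IsClosed (⋃ α ∈ Set.Ioi (0:ℝ), α • D) := by
  have hb : ∀ i, 0 ≤ b i := by
    intro i
    rw [hD, Set.mem_iInter] at h0
    have := h0 i
    simpa using this
  have key : (⋃ α ∈ Set.Ioi (0:ℝ), α • D) =
      ⋂ i : Fin m, {x : EuclideanSpace ℝ (Fin n) | b i = 0 → ⟪v i, x⟫ ≤ 0} := by
    ext x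
    simp only [Set.mem_iUnion, Set.mem_iInter, Set.mem_Ioi, Set.mem_setOf_eq]
    constructor
    · rintro ⟨α, hα, hx⟩ i hbi
      rw [Set.mem_smul_set_iff_inv_smul_mem₀ (ne_of_gt hα), hD, Set.mem_iInter] at hx
      have h1 := hx i
      rw [Set.mem_setOf_eq, real_inner_smul_right] at h1
      have hinv : (0:ℝ) < α⁻¹ := inv_pos.mpr hα
      nlinarith [h1, hbi]
    · intro hx
      set α : ℝ := 1 + ∑ i : Fin m, |⟪v i, x⟫| / b i with hαdef
      have hterm : ∀ i, 0 ≤ |⟪v i, x⟫| / b i := fun i => div_nonneg (abs_nonneg _) (hb i)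
      have hsum : 0 ≤ ∑ i : Fin m, |⟪v i, x⟫| / b i :=
        Finset.sum_nonneg fun i _ => hterm i
      have hαpos : (0:ℝ) < α := by rw [hαdef]; linarith
      refine ⟨α, hαpos, ?_⟩
      rw [Set.mem_smul_set_iff_inv_smul_mem₀ (ne_of_gt hαpos), hD, Set.mem_iInter]
      intro i
      rw [Set.mem_setOf_eq, real_inner_smul_right]
      rcases eq_or_lt_of_le (hb i) with h | h
      · have h2 : ⟪v i, x⟫ ≤ 0 := hx i h.symm
        have : α⁻¹ * ⟪v i, x⟫ ≤ 0 :=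
          mul_nonpos_of_nonneg_of_nonpos (le_of_lt (inv_pos.mpr hαpos)) h2
        linarith [hb i]
      · have hle : |⟪v i, x⟫| / b i ≤ ∑ j : Fin m, |⟪v j, x⟫| / b j :=
          Finset.single_le_sum (fun j _ => hterm j) (Finset.mem_univ i)
        have hα' : |⟪v i, x⟫| / b i ≤ α := by rw [hαdef]; linarith
        have h3 : ⟪v i, x⟫ ≤ α * b i := by
          calc ⟪v i, x⟫ ≤ |⟪v i, x⟫| := le_abs_self _
            _ = (|⟪v i, x⟫| / b i) * b i := (div_mul_cancel₀ _ (ne_of_gt h)).symm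
            _ ≤ α * b i := mul_le_mul_of_nonneg_right hα' (le_of_lt h)
        rw [inv_mul_le_iff₀ hαpos]
        linarith
  rw [key]
  apply isClosed_iInter
  intro i
  by_cases hbi : b i = 0
  · simp only [hbi, true_implies]
    exact isClosed_le (Continuous.inner continuous_const continuous_id) continuous_const
  · simp only [hbi, false_implies]
    simp [Set.setOf_true]
end

section
/- Suppose each Sₜ : ℝⁿ → ℝ ∪ {+∞} satisfies mₜ := inf_{x ∈ ℝⁿ} Sₜ(x) > −∞ and Sₜ(0) = 0, and 0 ∈ Dₜ. Then every c in ⋂_{α>0} αC, where C is the hedgeable-claims set, satisfies c ≤ 0 componentwise; in particular (⋂_{α>0} αC) ∩ M₊ = {0} (no scalable arbitrage). -/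
/-!
A lower bound `m ≤ Sₜ` forces every claim of `C` to satisfy `cₜ ≤ -m`, so every claim of `α • C`
satisfies `cₜ ≤ α * (-m)`. A claim lying in `α • C` for all `α > 0` is therefore bounded by
quantities tending to `0`, hence nonpositive. Conversely the zero strategy hedges the zero claim.
-/

open scoped Pointwise

/-- The set of claim processes superhedgeable at zero cost (see paper, Section 3). -/
def hedgeSet {n T : ℕ} (S : Fin (T+1) → EuclideanSpace ℝ (Fin n) → EReal)
    (D : Fin (T+1) → Set (EuclideanSpace ℝ (Fin n))) : Set (Fin (T+1) → ℝ) :=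
  {c | ∃ x : ℕ → EuclideanSpace ℝ (Fin n), x T = 0 ∧
    ∀ t : Fin (T+1), x t ∈ D t ∧
      S t (x t - (if (t : ℕ) = 0 then 0 else x ((t : ℕ) - 1))) + ((c t : ℝ) : EReal) ≤ 0}

open Filter Topology

theorem nonpos_of_forall_pos_le_mul {a b : ℝ} (h : ∀ α > 0, a ≤ α * b) : a ≤ 0 := by
  have hlim : Tendsto (fun α : ℝ => α * b) (𝓝[>] 0) (𝓝 0) := by
    simpa using ((tendsto_id (x := 𝓝 (0 : ℝ))).mul_const b).mono_left nhdsWithin_le_nhds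
  exact ge_of_tendsto hlim (eventually_nhdsWithin_of_forall h)

section HedgeSet

variable {n T : ℕ} {S : Fin (T+1) → EuclideanSpace ℝ (Fin n) → EReal}
  {D : Fin (T+1) → Set (EuclideanSpace ℝ (Fin n))}

theorem le_neg_of_mem_hedgeSet {c : Fin (T+1) → ℝ} (hc : c ∈ hedgeSet S D) {t : Fin (T+1)}
    {m : ℝ} (hm : ∀ x, (m : EReal) ≤ S t x) : c t ≤ -m := by
  obtain ⟨x, -, hx⟩ := hc
  have h : ((m + c t : ℝ) : EReal) ≤ 0 :=
    calc ((m + c t : ℝ) : EReal) = (m : EReal) + (c t : EReal) := EReal.coe_add m (c t)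
      _ ≤ _ := add_le_add_left (hm _) _
      _ ≤ 0 := (hx t).2
  have : m + c t ≤ 0 := by exact_mod_cast h
  linarith

theorem zero_mem_hedgeSet (hS0 : ∀ t, S t 0 = 0) (hD0 : ∀ t, (0 : EuclideanSpace ℝ (Fin n)) ∈ D t) :
    0 ∈ hedgeSet S D :=
  ⟨0, rfl, fun t => ⟨hD0 t, by simp [hS0 t]⟩⟩

theorem nonpos_of_mem_iInter_smul_hedgeSet (hbdd : ∀ t, ∃ m : ℝ, ∀ x, (m : EReal) ≤ S t x)
    {c : Fin (T+1) → ℝ} (hc : c ∈ ⋂ α ∈ Set.Ioi (0:ℝ), α • hedgeSet S D) (t : Fin (T+1)) :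
    c t ≤ 0 := by
  obtain ⟨m, hm⟩ := hbdd t
  refine nonpos_of_forall_pos_le_mul (b := -m) fun α hα => ?_
  obtain ⟨c', hc', rfl⟩ := Set.mem_iInter₂.mp hc α hα
  exact mul_le_mul_of_nonneg_left (le_neg_of_mem_hedgeSet hc' hm) hα.le

theorem zero_mem_iInter_smul_hedgeSet (hS0 : ∀ t, S t 0 = 0)
    (hD0 : ∀ t, (0 : EuclideanSpace ℝ (Fin n)) ∈ D t) :
    (0 : Fin (T+1) → ℝ) ∈ ⋂ α ∈ Set.Ioi (0:ℝ), α • hedgeSet S D :=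
  Set.mem_iInter₂.mpr fun α _ => ⟨0, zero_mem_hedgeSet hS0 hD0, smul_zero α⟩

end HedgeSet

/-- If each cost function `Sₜ` is bounded below (`inf_x Sₜ(x) > -∞`) with
`Sₜ(0) = 0` and `0 ∈ Dₜ`, then every claim `c` in `⋂_{α>0} α C` is componentwise
nonpositive; in particular `(⋂_{α>0} α C) ∩ M₊ = {0}` (no scalable arbitrage). -/
theorem stmt_12 (n T : ℕ) (S : Fin (T+1) → EuclideanSpace ℝ (Fin n) → EReal)
    (D : Fin (T+1) → Set (EuclideanSpace ℝ (Fin n)))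
    (hbdd : ∀ t, ∃ m : ℝ, ∀ x, ((m : ℝ) : EReal) ≤ S t x)
    (hS0 : ∀ t, S t 0 = 0)
    (hD0 : ∀ t, (0 : EuclideanSpace ℝ (Fin n)) ∈ D t) :
    (∀ c ∈ ⋂ α ∈ Set.Ioi (0:ℝ), α • hedgeSet S D, ∀ t : Fin (T+1), c t ≤ 0) ∧
    (⋂ α ∈ Set.Ioi (0:ℝ), α • hedgeSet S D) ∩ {c : Fin (T+1) → ℝ | ∀ t, 0 ≤ c t} = {0} := by
  have nonpos := fun c (hc : c ∈ ⋂ α ∈ Set.Ioi (0:ℝ), α • hedgeSet S D) =>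
    nonpos_of_mem_iInter_smul_hedgeSet hbdd hc
  refine ⟨nonpos, Set.eq_singleton_iff_unique_mem.mpr ⟨?_, ?_⟩⟩
  · exact ⟨zero_mem_iInter_smul_hedgeSet hS0 hD0, fun _ => le_rfl⟩
  · rintro c ⟨hc, hpos⟩
    exact funext fun t => le_antisymm (nonpos c hc t) (hpos t)
end

section
/- Let f : ℝⁿ → ℝ ∪ {+∞} be a polyhedral convex function with f(0) = 0 that is proper. Then the range of its subdifferential mapping, ⋃_{x} ∂f(x), equals dom f*, which is a polyhedral (hence closed) convex set. -/
/-!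
Fourier–Motzkin elimination: the projection of a polyhedron `{(x, y) | A (x, y) ≤ b}` is cut
out by the nonnegative combinations of its constraints in which `y` cancels, so it is again a
polyhedron. Hence a linear functional `ℓ` bounded above on a nonempty polyhedron attains its
supremum (its image is a closed subset of `ℝ`), and it is a nonnegative combination of the
constraints (eliminate `p` from `s ≤ ℓ p, A p ≤ b`; some surviving bound on `s` has a positive
coefficient).

Take `ℓ (x, t) = ⟪u, x⟫ - t` on the epigraph of `f`. Then `f* u < ⊤` says exactly that `ℓ` is
bounded above there; a maximiser `(x, t)` gives `u ∈ ∂f(x)`, and conversely a subgradient bounds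
`f* u`. The multiplier description gives `dom f* = {∑ cᵢ vᵢ | c ≥ 0, ∑ cᵢ aᵢ = -1}`, a linear
image of a polyhedron, hence a polyhedron, closed and convex.
-/

open scoped RealInnerProductSpace

open Matrix

lemma LinearMap.map_mk_eq_add {R E F G : Type*} [Semiring R] [AddCommMonoid E] [AddCommMonoid F]
    [AddCommMonoid G] [Module R E] [Module R F] [Module R G] (A : E × F →ₗ[R] G) (x : E) (y : F) :
    A (x, y) = A (x, 0) + A (0, y) := by
  rw [← map_add, Prod.mk_add_mk, add_zero, zero_add]

def HasFourierMotzkinElimination (F : Type) [AddCommGroup F] [Module ℝ F] : Prop :=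
  ∀ (E : Type) [AddCommGroup E] [Module ℝ E] (ι : Type) [Fintype ι] (A : E × F →ₗ[ℝ] ι → ℝ),
    ∃ (κ : Type) (_ : Fintype κ) (M : Matrix κ ι ℝ), (∀ j i, 0 ≤ M j i) ∧
      (∀ y, M *ᵥ A (0, y) = 0) ∧ ∀ x b, M *ᵥ A (x, 0) ≤ M *ᵥ b → ∃ y, A (x, y) ≤ b

section FourierMotzkin

variable {ι κ : Type} [Fintype ι]

lemma Matrix.mulVec_mono_of_nonneg {M : Matrix κ ι ℝ} (hM : ∀ j i, 0 ≤ M j i) {v w : ι → ℝ}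
    (h : v ≤ w) : M *ᵥ v ≤ M *ᵥ w :=
  fun j => dotProduct_le_dotProduct_of_nonneg_left h (hM j)

lemma Matrix.mulVec_apply_inl_le {E F : Type} [AddCommGroup E] [Module ℝ E] [AddCommGroup F]
    [Module ℝ F] {A : E × F →ₗ[ℝ] ι → ℝ} {M : Matrix κ ι ℝ} (hM : ∀ j i, 0 ≤ M j i)
    (hker : ∀ y, M *ᵥ A (0, y) = 0) {x : E} {y : F} {b : ι → ℝ} (h : A (x, y) ≤ b) :
    M *ᵥ A (x, 0) ≤ M *ᵥ b := by
  simpa [A.map_mk_eq_add x y, mulVec_add, hker] using mulVec_mono_of_nonneg hM h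

lemma Finset.exists_between_of_forall_le (s t : Finset ℝ) (h : ∀ x ∈ s, ∀ y ∈ t, x ≤ y) :
    ∃ z, (∀ x ∈ s, x ≤ z) ∧ ∀ y ∈ t, z ≤ y := by
  rcases s.eq_empty_or_nonempty with rfl | hs
  · obtain ⟨z, hz⟩ := t.bddBelow
    exact ⟨z, by simp, hz⟩
  rcases t.eq_empty_or_nonempty with rfl | ht
  · obtain ⟨z, hz⟩ := s.bddAbove
    exact ⟨z, hz, by simp⟩
  obtain ⟨z, hz⟩ := _root_.exists_between_of_forall_le (Finset.coe_nonempty.2 hs)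
    (Finset.coe_nonempty.2 ht) h
  exact ⟨z, hz.1, hz.2⟩

lemma exists_forall_mul_le (c r : ι → ℝ) (h₀ : ∀ i, c i = 0 → 0 ≤ r i)
    (h : ∀ i i', 0 < c i → c i' < 0 → 0 ≤ -c i' * r i + c i * r i') :
    ∃ t, ∀ i, t * c i ≤ r i := by
  classical
  obtain ⟨t, hlow, hupp⟩ := Finset.exists_between_of_forall_le
    ((Finset.univ.filter fun i => c i < 0).image fun i => r i / c i)
    ((Finset.univ.filter fun i => 0 < c i).image fun i => r i / c i) (by
      simp only [Finset.mem_image, Finset.mem_filter, Finset.mem_univ, true_and]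
      rintro _ ⟨i', hi', rfl⟩ _ ⟨i, hi, rfl⟩
      rw [← neg_div_neg_eq, div_le_div_iff₀ (neg_pos.2 hi') hi]
      linarith [h i i' hi hi'])
  refine ⟨t, fun i => ?_⟩
  rcases lt_trichotomy (c i) 0 with hi | hi | hi
  · have := hlow _ (Finset.mem_image_of_mem _ (by simpa using hi))
    rwa [div_le_iff_of_neg hi] at this
  · simpa [hi] using h₀ i hi
  · have := hupp _ (Finset.mem_image_of_mem _ (by simpa using hi))
    rwa [le_div_iff₀ hi] at this

lemma HasFourierMotzkinElimination.real : HasFourierMotzkinElimination ℝ := by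
  intro E _ _ ι _ A
  classical
  set c := A (0, 1)
  have hA : ∀ x t, A (x, t) = A (x, 0) + t • c := fun x t => by
    rw [A.map_mk_eq_add, ← map_smul, Prod.smul_mk, smul_zero, smul_eq_mul, mul_one]
  -- the rows of `M`: the constraints free of `t`, and the positive combinations of one upper and
  -- one lower bound on `t` in which `t` cancels
  let row : ι × ι → ι → ℝ := fun p =>
    if c p.1 = 0 then Pi.single p.1 1
    else if 0 < c p.1 ∧ c p.2 < 0 then (-c p.2) • Pi.single p.1 1 + c p.1 • Pi.single p.2 1
    else 0
  have hrow : ∀ p w, row p ⬝ᵥ w = if c p.1 = 0 then w p.1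
      else if 0 < c p.1 ∧ c p.2 < 0 then -c p.2 * w p.1 + c p.1 * w p.2 else 0 := by
    intro p w
    simp only [row]
    split_ifs <;> simp [add_dotProduct, smul_dotProduct, single_dotProduct]
  have hM : ∀ w p, (of row *ᵥ w) p = row p ⬝ᵥ w := fun _ _ => rfl
  have hsingle : ∀ j i, 0 ≤ (Pi.single j (1 : ℝ) : ι → ℝ) i := fun j i => by
    rw [Pi.single_apply]; split_ifs <;> norm_num
  refine ⟨ι × ι, inferInstance, Matrix.of row, ?_, ?_, ?_⟩
  · intro p i
    simp only [of_apply, row]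
    split_ifs with h₁ h₂
    · exact hsingle _ _
    · simp only [Pi.add_apply, Pi.smul_apply, smul_eq_mul]
      exact add_nonneg (mul_nonneg (by linarith [h₂.2]) (hsingle _ _))
        (mul_nonneg h₂.1.le (hsingle _ _))
    · exact le_rfl
  · intro t
    ext p
    rw [hM, hA, Prod.mk_zero_zero, map_zero, zero_add, hrow]
    split_ifs with h₁ h₂
    · simp [h₁]
    · simp only [Pi.smul_apply, smul_eq_mul, Pi.zero_apply]; ring
    · rfl
  · intro x b hle
    obtain ⟨t, ht⟩ := exists_forall_mul_le c (b - A (x, 0)) (fun i hi => by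
        simpa [hM, hrow, hi, dotProduct_sub] using sub_nonneg.2 (hle (i, i)))
      (fun i i' hi hi' => by
        have := hle (i, i')
        simp only [hM, hrow, hi.ne', hi, hi', and_self, if_true, if_false] at this
        simp only [Pi.sub_apply]
        linarith)
    exact ⟨t, fun i => by rw [hA]; simpa [le_sub_iff_add_le', mul_comm] using ht i⟩

end FourierMotzkin

namespace HasFourierMotzkinElimination

variable {F G : Type} [AddCommGroup F] [Module ℝ F] [AddCommGroup G] [Module ℝ G]

lemma of_subsingleton [Subsingleton F] : HasFourierMotzkinElimination F := by
  intro E _ _ ι _ A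
  classical
  refine ⟨ι, inferInstance, 1, fun j i => ?_, fun y => ?_, fun x b h => ⟨0, ?_⟩⟩
  · rw [one_apply]; split_ifs <;> norm_num
  · rw [Subsingleton.elim y 0, Prod.mk_zero_zero, map_zero, mulVec_zero]
  · simpa using h

lemma of_linearEquiv (hF : HasFourierMotzkinElimination F) (e : F ≃ₗ[ℝ] G) :
    HasFourierMotzkinElimination G := by
  intro E _ _ ι _ A
  obtain ⟨κ, _, M, hM, hker, hfeas⟩ := hF E ι (A ∘ₗ LinearMap.id.prodMap e.toLinearMap)
  refine ⟨κ, inferInstance, M, hM, fun y => by simpa using hker (e.symm y), fun x b h => ?_⟩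
  obtain ⟨y, hy⟩ := hfeas x b (by simpa using h)
  exact ⟨e y, hy⟩

lemma prod (hF : HasFourierMotzkinElimination F) (hG : HasFourierMotzkinElimination G) :
    HasFourierMotzkinElimination (F × G) := by
  intro E _ _ ι _ A
  set A₁ := A ∘ₗ (LinearEquiv.prodAssoc ℝ E F G).toLinearMap
  obtain ⟨κ₁, _, M₁, hM₁, hker₁, hfeas₁⟩ := hG (E × F) ι A₁
  set A₂ := M₁.mulVecLin ∘ₗ A₁ ∘ₗ LinearMap.inl ℝ (E × F) G
  obtain ⟨κ₂, _, M₂, hM₂, hker₂, hfeas₂⟩ := hF E κ₁ A₂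
  have hA₁ : ∀ z y, M₁ *ᵥ A₁ (z, y) = A₂ z := fun z y => by
    simp [A₂, A₁.map_mk_eq_add z y, mulVec_add, hker₁]
  have hA : ∀ x y z, A (x, (y, z)) = A₁ ((x, y), z) := fun _ _ _ => rfl
  refine ⟨κ₂, inferInstance, M₂ * M₁, fun j i => ?_, fun ⟨y, z⟩ => ?_, fun x b h => ?_⟩
  · exact Finset.sum_nonneg fun k _ => mul_nonneg (hM₂ j k) (hM₁ k i)
  · rw [← mulVec_mulVec, hA, hA₁, hker₂]
  · rw [← mulVec_mulVec, ← mulVec_mulVec] at h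
    replace h : M₂ *ᵥ M₁ *ᵥ A₁ ((x, 0), 0) ≤ M₂ *ᵥ M₁ *ᵥ b := h
    obtain ⟨y, hy⟩ := hfeas₂ x (M₁ *ᵥ b) (by rwa [hA₁] at h)
    obtain ⟨z, hz⟩ := hfeas₁ (x, y) b (by rwa [hA₁])
    exact ⟨(y, z), hz⟩

lemma pi_fin (n : ℕ) : HasFourierMotzkinElimination (Fin n → ℝ) := by
  induction n with
  | zero => exact of_subsingleton
  | succ n ih => exact (real.prod ih).of_linearEquiv (Fin.consLinearEquiv ℝ fun _ => ℝ)

lemma of_finiteDimensional [FiniteDimensional ℝ F] : HasFourierMotzkinElimination F :=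
  (pi_fin _).of_linearEquiv (Module.finBasis ℝ F).equivFun.symm

end HasFourierMotzkinElimination

def IsPolyhedral {V : Type*} [AddCommGroup V] [Module ℝ V] (s : Set V) : Prop :=
  ∃ (ι : Type) (_ : Fintype ι) (A : V →ₗ[ℝ] ι → ℝ) (b : ι → ℝ), s = {p | A p ≤ b}

section Polyhedral

variable {V W : Type} [AddCommGroup V] [Module ℝ V] [AddCommGroup W] [Module ℝ W]

lemma isPolyhedral_setOf_le {ι : Type} [Fintype ι] (A : V →ₗ[ℝ] ι → ℝ) (b : ι → ℝ) :
    IsPolyhedral {p | A p ≤ b} :=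
  ⟨ι, inferInstance, A, b, rfl⟩

lemma IsPolyhedral.inter {s t : Set V} (hs : IsPolyhedral s) (ht : IsPolyhedral t) :
    IsPolyhedral (s ∩ t) := by
  obtain ⟨ι, _, A, b, rfl⟩ := hs
  obtain ⟨ι', _, A', b', rfl⟩ := ht
  refine ⟨ι ⊕ ι', inferInstance,
    (LinearEquiv.sumArrowLequivProdArrow ι ι' ℝ ℝ).symm.toLinearMap ∘ₗ A.prod A',
    Sum.elim b b', ?_⟩
  ext p
  exact Sum.elim_le_elim_iff.symm

lemma IsPolyhedral.preimage {s : Set W} (hs : IsPolyhedral s) (L : V →ₗ[ℝ] W) :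
    IsPolyhedral (L ⁻¹' s) := by
  obtain ⟨ι, _, A, b, rfl⟩ := hs
  exact ⟨ι, inferInstance, A ∘ₗ L, b, rfl⟩

lemma isPolyhedral_setOf_eq {ι : Type} [Fintype ι] (A : V →ₗ[ℝ] ι → ℝ) (b : ι → ℝ) :
    IsPolyhedral {p | A p = b} := by
  convert (isPolyhedral_setOf_le A b).inter (isPolyhedral_setOf_le (-A) (-b)) using 1
  ext p
  simp [le_antisymm_iff]

lemma isPolyhedral_setOf_apply_eq (g : V →ₗ[ℝ] ℝ) (c : ℝ) : IsPolyhedral {p | g p = c} := by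
  convert isPolyhedral_setOf_eq (LinearMap.pi fun _ : Unit => g) (fun _ => c) using 1
  ext p
  simp [funext_iff]

lemma isPolyhedral_zero [FiniteDimensional ℝ V] : IsPolyhedral ({0} : Set V) := by
  convert isPolyhedral_setOf_eq (Module.finBasis ℝ V).equivFun.toLinearMap 0 using 1
  ext p
  simp

lemma IsPolyhedral.image_fst [FiniteDimensional ℝ W] {s : Set (V × W)} (hs : IsPolyhedral s) :
    IsPolyhedral (Prod.fst '' s) := by
  obtain ⟨ι, _, A, b, rfl⟩ := hs
  obtain ⟨κ, _, M, hM, hker, hfeas⟩ := HasFourierMotzkinElimination.of_finiteDimensional V ι A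
  refine ⟨κ, inferInstance, M.mulVecLin ∘ₗ A ∘ₗ LinearMap.inl ℝ V W, M *ᵥ b, ?_⟩
  ext x
  constructor
  · rintro ⟨⟨x, y⟩, h, rfl⟩
    exact mulVec_apply_inl_le hM hker h
  · intro h
    obtain ⟨y, hy⟩ := hfeas x b h
    exact ⟨(x, y), hy, rfl⟩

lemma IsPolyhedral.image [FiniteDimensional ℝ V] [FiniteDimensional ℝ W] {s : Set V}
    (hs : IsPolyhedral s) (L : V →ₗ[ℝ] W) : IsPolyhedral (L '' s) := by
  have hgraph : L '' s = Prod.fst '' ((LinearMap.snd ℝ W V ⁻¹' s) ∩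
      (LinearMap.fst ℝ W V - L ∘ₗ LinearMap.snd ℝ W V) ⁻¹' {0}) := by
    ext w
    simp only [Set.mem_image, Set.mem_inter_iff, Set.mem_preimage, Set.mem_singleton_iff,
      LinearMap.sub_apply, LinearMap.fst_apply, LinearMap.comp_apply, LinearMap.snd_apply,
      sub_eq_zero, Prod.exists, exists_eq_right, exists_and_right]
    exact exists_congr fun _ => and_congr_right' eq_comm
  rw [hgraph]
  exact ((hs.preimage _).inter (isPolyhedral_zero.preimage _)).image_fst

lemma IsPolyhedral.convex {s : Set V} (hs : IsPolyhedral s) : Convex ℝ s := by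
  obtain ⟨ι, _, A, b, rfl⟩ := hs
  exact (convex_Iic b).linear_preimage A

lemma IsPolyhedral.isClosed [TopologicalSpace V] [IsTopologicalAddGroup V] [ContinuousSMul ℝ V]
    [T2Space V] [FiniteDimensional ℝ V] {s : Set V} (hs : IsPolyhedral s) : IsClosed s := by
  obtain ⟨ι, _, A, b, rfl⟩ := hs
  exact isClosed_le A.continuous_of_finiteDimensional continuous_const

lemma IsPolyhedral.exists_eq_iInter_inner_le {E : Type*} [NormedAddCommGroup E]
    [InnerProductSpace ℝ E] [FiniteDimensional ℝ E] {s : Set E} (hs : IsPolyhedral s) :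
    ∃ (k : ℕ) (w : Fin k → E) (d : Fin k → ℝ), s = ⋂ i, {u | ⟪w i, u⟫ ≤ d i} := by
  obtain ⟨ι, _, A, b, rfl⟩ := hs
  let e := (Fintype.equivFin ι).symm
  refine ⟨Fintype.card ι, fun i => (InnerProductSpace.toDual ℝ E).symm
    (LinearMap.proj (e i) ∘ₗ A).toContinuousLinearMap, b ∘ e, ?_⟩
  ext u
  simp only [Set.mem_ofPred_eq, Set.mem_iInter, InnerProductSpace.toDual_symm_apply]
  exact ⟨fun h i => h (e i), fun h i => by simpa using h (e.symm i)⟩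

end Polyhedral

section LinearProgramming

variable {V : Type} [AddCommGroup V] [Module ℝ V] [FiniteDimensional ℝ V]

lemma IsPolyhedral.exists_isMaxOn {s : Set V} (hs : IsPolyhedral s) (hne : s.Nonempty)
    (ℓ : V →ₗ[ℝ] ℝ) (hbdd : BddAbove (ℓ '' s)) : ∃ p ∈ s, IsMaxOn ℓ s p := by
  obtain ⟨p, hp, hpmax⟩ := (hs.image ℓ).isClosed.csSup_mem (hne.image ℓ) hbdd
  exact ⟨p, hp, isMaxOn_iff.2 fun q hq => hpmax ▸ le_csSup hbdd (Set.mem_image_of_mem ℓ hq)⟩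

variable {ι : Type} [Fintype ι]

lemma exists_nonneg_eq_dotProduct_of_bddAbove (A : V →ₗ[ℝ] ι → ℝ) (b : ι → ℝ)
    (ℓ : V →ₗ[ℝ] ℝ) (hne : ∃ p, A p ≤ b) (hbdd : BddAbove (ℓ '' {p | A p ≤ b})) :
    ∃ c : ι → ℝ, 0 ≤ c ∧ ∀ p, ℓ p = c ⬝ᵥ A p := by
  obtain ⟨p₀, hp₀⟩ := hne
  obtain ⟨C, hC⟩ := hbdd
  let B : ℝ × V →ₗ[ℝ] Option ι → ℝ := (LinearEquiv.piOptionEquivProd ℝ).symm.toLinearMap ∘ₗ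
    (LinearMap.fst ℝ ℝ V - ℓ ∘ₗ LinearMap.snd ℝ ℝ V).prod (A ∘ₗ LinearMap.snd ℝ ℝ V)
  let β : Option ι → ℝ := fun o => o.elim 0 b
  have hB : ∀ (μ : Option ι → ℝ) s p,
      μ ⬝ᵥ B (s, p) = μ none * (s - ℓ p) + (μ ∘ some) ⬝ᵥ A p :=
    fun _ _ _ => Fintype.sum_option _
  have hBle : ∀ s p, B (s, p) ≤ β ↔ s ≤ ℓ p ∧ A p ≤ b := fun s p => by
    simp only [Pi.le_def, Option.forall]
    change s - ℓ p ≤ 0 ∧ (∀ i, A p i ≤ b i) ↔ _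
    rw [sub_nonpos]
  obtain ⟨κ, _, M, hM, hker, hfeas⟩ := HasFourierMotzkinElimination.of_finiteDimensional ℝ _ B
  have hpos : ∃ j, 0 < M j none := by
    by_contra! h
    have hzero : ∀ s, M *ᵥ B (s, 0) = 0 := fun s => by
      ext j
      change M j ⬝ᵥ _ = 0
      simp [hB, le_antisymm (h j) (hM j none)]
    obtain ⟨p, hp⟩ := hfeas (C + 1) β (by
      rw [hzero, ← hzero (ℓ p₀)]
      exact mulVec_apply_inl_le hM hker ((hBle _ _).2 ⟨le_rfl, hp₀⟩))
    obtain ⟨h₁, h₂⟩ := (hBle _ _).1 hp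
    linarith [hC ⟨p, h₂, rfl⟩]
  obtain ⟨j, hj⟩ := hpos
  refine ⟨(M j none)⁻¹ • (M j ∘ some), fun i => mul_nonneg (inv_nonneg.2 hj.le) (hM j _),
    fun p => ?_⟩
  have h := congrFun (hker p) j
  change M j ⬝ᵥ _ = 0 at h
  rw [hB] at h
  rw [smul_dotProduct, smul_eq_mul]
  field_simp
  linarith

lemma bddAbove_image_iff_exists_nonneg_eq_dotProduct (A : V →ₗ[ℝ] ι → ℝ) (b : ι → ℝ)
    (ℓ : V →ₗ[ℝ] ℝ) (hne : ∃ p, A p ≤ b) :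
    BddAbove (ℓ '' {p | A p ≤ b}) ↔ ∃ c : ι → ℝ, 0 ≤ c ∧ ∀ p, ℓ p = c ⬝ᵥ A p := by
  refine ⟨exists_nonneg_eq_dotProduct_of_bddAbove A b ℓ hne, fun ⟨c, hc, h⟩ => ⟨c ⬝ᵥ b, ?_⟩⟩
  rintro _ ⟨p, hp, rfl⟩
  rw [h]
  exact dotProduct_le_dotProduct_of_nonneg_left hp hc

end LinearProgramming

lemma EReal.coe_sub_le_coe_iff_forall (a c : ℝ) (z : EReal) :
    (a : EReal) - z ≤ c ↔ ∀ t : ℝ, z ≤ t → a - t ≤ c := by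
  induction z with
  | bot => simpa using ⟨a - c - 1, by linarith⟩
  | coe r =>
    norm_cast
    exact ⟨fun h t ht => by linarith, fun h => h r le_rfl⟩
  | top => simp

lemma EReal.coe_le_iff_forall (r : ℝ) (z : EReal) : (r : EReal) ≤ z ↔ ∀ t : ℝ, z ≤ t → r ≤ t := by
  induction z with
  | bot => simpa using ⟨r - 1, by linarith⟩
  | coe s =>
    exact ⟨fun h t ht => by exact_mod_cast h.trans ht, fun h => by exact_mod_cast h s le_rfl⟩
  | top => simp

lemma EReal.ne_top_iff_exists_le_coe {z : EReal} : z ≠ ⊤ ↔ ∃ c : ℝ, z ≤ c := by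
  refine ⟨fun h => ?_, fun ⟨c, hc⟩ => ne_top_of_le_ne_top (EReal.coe_ne_top c) hc⟩
  induction z with
  | bot => exact ⟨0, bot_le⟩
  | coe r => exact ⟨r, le_rfl⟩
  | top => exact absurd rfl h

noncomputable def fenchelConjugate {E : Type*} [NormedAddCommGroup E] [InnerProductSpace ℝ E]
    (f : E → EReal) (u : E) : EReal :=
  ⨆ x, ((⟪u, x⟫ : ℝ) : EReal) - f x

section FenchelConjugate

variable {E : Type*} [NormedAddCommGroup E] [InnerProductSpace ℝ E] {f : E → EReal}

lemma fenchelConjugate_le_coe_iff {u : E} {c : ℝ} :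
    fenchelConjugate f u ≤ c ↔ ∀ x (t : ℝ), f x ≤ t → ⟪u, x⟫ - t ≤ c :=
  iSup_le_iff.trans (forall_congr' fun _ => EReal.coe_sub_le_coe_iff_forall _ _ _)

lemma fenchelConjugate_ne_top_iff_bddAbove (u : E) :
    fenchelConjugate f u ≠ ⊤ ↔
      BddAbove ((innerₛₗ ℝ u).coprod (-LinearMap.id) '' {p : E × ℝ | f p.1 ≤ p.2}) := by
  simp only [EReal.ne_top_iff_exists_le_coe, fenchelConjugate_le_coe_iff, bddAbove_def,
    Set.forall_mem_image, Set.mem_ofPred_eq, Prod.forall, LinearMap.coprod_apply,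
    innerₛₗ_apply_apply, LinearMap.neg_apply, LinearMap.id_apply, ← sub_eq_add_neg]

lemma subgradient_iff_fenchelConjugate_le {x u : E} {r : ℝ} (hx : f x = r) :
    (∀ y, f x + ((⟪u, y - x⟫ : ℝ) : EReal) ≤ f y) ↔
      fenchelConjugate f u ≤ ((⟪u, x⟫ - r : ℝ) : EReal) := by
  rw [fenchelConjugate_le_coe_iff, hx]
  refine forall_congr' fun y => ?_
  rw [← EReal.coe_add, EReal.coe_le_iff_forall]
  refine forall_congr' fun t => imp_congr_right fun _ => ?_
  rw [inner_sub_right]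
  constructor <;> intro <;> linarith

lemma fenchelConjugate_ne_top_of_subgradient (hbot : ∀ x, f x ≠ ⊥) (hproper : ∃ x, f x ≠ ⊤)
    {x u : E} (hu : ∀ y, f x + ((⟪u, y - x⟫ : ℝ) : EReal) ≤ f y) : fenchelConjugate f u ≠ ⊤ := by
  obtain ⟨x₀, hx₀⟩ := hproper
  have hx : f x ≠ ⊤ := fun h => hx₀ (by simpa [h] using hu x₀)
  have hr : f x = (f x).toReal := (EReal.coe_toReal hx (hbot x)).symm
  exact ne_top_of_le_ne_top (EReal.coe_ne_top _) ((subgradient_iff_fenchelConjugate_le hr).1 hu)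

end FenchelConjugate

lemma exists_subgradient_of_fenchelConjugate_ne_top {E : Type} [NormedAddCommGroup E]
    [InnerProductSpace ℝ E] [FiniteDimensional ℝ E] {f : E → EReal} (hbot : ∀ x, f x ≠ ⊥)
    (hproper : ∃ x, f x ≠ ⊤) (hepi : IsPolyhedral {p : E × ℝ | f p.1 ≤ p.2}) {u : E}
    (hu : fenchelConjugate f u ≠ ⊤) : ∃ x, ∀ y, f x + ((⟪u, y - x⟫ : ℝ) : EReal) ≤ f y := by
  obtain ⟨x₀, hx₀⟩ := hproper
  obtain ⟨⟨x, t⟩, hxt : f x ≤ t, hmax⟩ := hepi.exists_isMaxOn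
    ⟨(x₀, (f x₀).toReal), (EReal.coe_toReal hx₀ (hbot x₀)).ge⟩ _
    ((fenchelConjugate_ne_top_iff_bddAbove u).1 hu)
  have hr : f x = (f x).toReal :=
    (EReal.coe_toReal (ne_top_of_le_ne_top (EReal.coe_ne_top t) hxt) (hbot x)).symm
  refine ⟨x, (subgradient_iff_fenchelConjugate_le hr).2 (fenchelConjugate_le_coe_iff.2 ?_)⟩
  intro y s hys
  have hle := isMaxOn_iff.1 hmax (y, s) hys
  have hrt : (f x).toReal ≤ t := by rw [hr] at hxt; exact_mod_cast hxt
  simp only [LinearMap.coprod_apply, innerₛₗ_apply_apply, LinearMap.neg_apply,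
    LinearMap.id_apply] at hle
  linarith

section PolyhedralEpigraph

variable {E : Type} [NormedAddCommGroup E] [InnerProductSpace ℝ E] {ι : Type}

lemma isPolyhedral_setOf_nonneg [Fintype ι] : IsPolyhedral {c : ι → ℝ | 0 ≤ c} := by
  convert isPolyhedral_setOf_le (-LinearMap.id : (ι → ℝ) →ₗ[ℝ] ι → ℝ) 0 using 1
  ext c
  simp

noncomputable def innerAddMulMap (v : ι → E) (a : ι → ℝ) : E × ℝ →ₗ[ℝ] ι → ℝ :=
  LinearMap.pi fun i => (innerₛₗ ℝ (v i)).coprod (a i • LinearMap.id)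

@[simp]
lemma innerAddMulMap_apply (v : ι → E) (a : ι → ℝ) (p : E × ℝ) (i : ι) :
    innerAddMulMap v a p i = ⟪v i, p.1⟫ + a i * p.2 := by
  simp [innerAddMulMap]

lemma dotProduct_innerAddMulMap [Fintype ι] (v : ι → E) (a c : ι → ℝ) (p : E × ℝ) :
    c ⬝ᵥ innerAddMulMap v a p = ⟪Fintype.linearCombination ℝ v c, p.1⟫ + c ⬝ᵥ a * p.2 := by
  simp [dotProduct, Fintype.linearCombination_apply, sum_inner, real_inner_smul_left, mul_add,
    Finset.sum_add_distrib, Finset.sum_mul, mul_assoc]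

lemma fenchelConjugate_ne_top_iff_of_epigraph_eq [Fintype ι] [FiniteDimensional ℝ E]
    {f : E → EReal} {v : ι → E} {a b : ι → ℝ}
    (hepi : {p : E × ℝ | f p.1 ≤ p.2} = {p | innerAddMulMap v a p ≤ b})
    (hbot : ∀ x, f x ≠ ⊥) (hproper : ∃ x, f x ≠ ⊤) (u : E) :
    fenchelConjugate f u ≠ ⊤ ↔
      u ∈ Fintype.linearCombination ℝ v '' ({c | 0 ≤ c} ∩ {c | c ⬝ᵥ a = -1}) := by
  obtain ⟨x₀, hx₀⟩ := hproper
  have hne : ∃ p, innerAddMulMap v a p ≤ b :=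
    ⟨(x₀, (f x₀).toReal), (Set.ext_iff.1 hepi _).1 (EReal.coe_toReal hx₀ (hbot x₀)).ge⟩
  rw [fenchelConjugate_ne_top_iff_bddAbove, hepi,
    bddAbove_image_iff_exists_nonneg_eq_dotProduct _ _ _ hne]
  simp only [LinearMap.coprod_apply, innerₛₗ_apply_apply, LinearMap.neg_apply, LinearMap.id_apply,
    dotProduct_innerAddMulMap, Prod.forall]
  constructor
  · rintro ⟨c, hc, h⟩
    refine ⟨c, ⟨hc, ?_⟩, ext_inner_right ℝ fun x => ?_⟩
    · simpa using (h 0 1).symm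
    · simpa using (h x 0).symm
  · rintro ⟨c, ⟨hc, ha⟩, rfl⟩
    exact ⟨c, hc, fun x t => by rw [show c ⬝ᵥ a = -1 from ha]; ring⟩

end PolyhedralEpigraph

theorem stmt_17_general (n : ℕ) (f : EuclideanSpace ℝ (Fin n) → EReal)
    (hnebot : ∀ x, f x ≠ ⊥) (hproper : ∃ x, f x ≠ ⊤)
    (hpoly : ∃ (m : ℕ) (v : Fin m → EuclideanSpace ℝ (Fin n)) (a b : Fin m → ℝ),
      {p : EuclideanSpace ℝ (Fin n) × ℝ | f p.1 ≤ ((p.2 : ℝ) : EReal)} =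
        ⋂ i : Fin m, {p : EuclideanSpace ℝ (Fin n) × ℝ | ⟪v i, p.1⟫ + a i * p.2 ≤ b i})
    (fstar : EuclideanSpace ℝ (Fin n) → EReal)
    (hfstar : ∀ u, fstar u =
      ⨆ x : EuclideanSpace ℝ (Fin n), (((⟪u, x⟫ : ℝ) : EReal) - f x)) :
    (⋃ x : EuclideanSpace ℝ (Fin n),
        {u : EuclideanSpace ℝ (Fin n) | ∀ y, f x + ((⟪u, y - x⟫ : ℝ) : EReal) ≤ f y}) =
      {u : EuclideanSpace ℝ (Fin n) | fstar u ≠ ⊤} ∧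
    (∃ (k : ℕ) (w : Fin k → EuclideanSpace ℝ (Fin n)) (d : Fin k → ℝ),
      {u : EuclideanSpace ℝ (Fin n) | fstar u ≠ ⊤} =
        ⋂ i : Fin k, {u : EuclideanSpace ℝ (Fin n) | ⟪w i, u⟫ ≤ d i}) ∧
    IsClosed {u : EuclideanSpace ℝ (Fin n) | fstar u ≠ ⊤} ∧
    Convex ℝ {u : EuclideanSpace ℝ (Fin n) | fstar u ≠ ⊤} := by
  obtain rfl : fstar = fenchelConjugate f := funext hfstar
  obtain ⟨m, v, a, b, hepi⟩ := hpoly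
  replace hepi : {p : EuclideanSpace ℝ (Fin n) × ℝ | f p.1 ≤ p.2} =
      {p | innerAddMulMap v a p ≤ b} := by
    rw [hepi]
    ext p
    simp [Pi.le_def]
  have hdom : IsPolyhedral {u | fenchelConjugate f u ≠ ⊤} := by
    rw [Set.ext (fenchelConjugate_ne_top_iff_of_epigraph_eq hepi hnebot hproper)]
    exact (isPolyhedral_setOf_nonneg.inter
      (isPolyhedral_setOf_apply_eq (Fintype.linearCombination ℝ a) (-1))).image _
  refine ⟨?_, hdom.exists_eq_iInter_inner_le, hdom.isClosed, hdom.convex⟩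
  ext u
  simp only [Set.mem_iUnion, Set.mem_ofPred_eq]
  exact ⟨fun ⟨x, hx⟩ => fenchelConjugate_ne_top_of_subgradient hnebot hproper hx,
    exists_subgradient_of_fenchelConjugate_ne_top hnebot hproper
      (hepi ▸ isPolyhedral_setOf_le _ _)⟩

/-- For a proper polyhedral convex function `f : ℝⁿ → ℝ ∪ {+∞}` with
`f 0 = 0` (its epigraph is a finite intersection of closed half-spaces), the range
`⋃_x ∂f(x)` of its subdifferential mapping equals `dom f*`, which is a polyhedral
(hence closed) convex set. -/
theorem stmt_17 (n : ℕ) (f : EuclideanSpace ℝ (Fin n) → EReal)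
    (hnebot : ∀ x, f x ≠ ⊥) (hproper : ∃ x, f x ≠ ⊤) (hf0 : f 0 = 0)
    (hpoly : ∃ (m : ℕ) (v : Fin m → EuclideanSpace ℝ (Fin n)) (a b : Fin m → ℝ),
      {p : EuclideanSpace ℝ (Fin n) × ℝ | f p.1 ≤ ((p.2 : ℝ) : EReal)} =
        ⋂ i : Fin m, {p : EuclideanSpace ℝ (Fin n) × ℝ | ⟪v i, p.1⟫ + a i * p.2 ≤ b i})
    (fstar : EuclideanSpace ℝ (Fin n) → EReal)
    (hfstar : ∀ u, fstar u =
      ⨆ x : EuclideanSpace ℝ (Fin n), (((⟪u, x⟫ : ℝ) : EReal) - f x)) :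
    (⋃ x : EuclideanSpace ℝ (Fin n),
        {u : EuclideanSpace ℝ (Fin n) | ∀ y, f x + ((⟪u, y - x⟫ : ℝ) : EReal) ≤ f y}) =
      {u : EuclideanSpace ℝ (Fin n) | fstar u ≠ ⊤} ∧
    (∃ (k : ℕ) (w : Fin k → EuclideanSpace ℝ (Fin n)) (d : Fin k → ℝ),
      {u : EuclideanSpace ℝ (Fin n) | fstar u ≠ ⊤} =
        ⋂ i : Fin k, {u : EuclideanSpace ℝ (Fin n) | ⟪w i, u⟫ ≤ d i}) ∧
    IsClosed {u : EuclideanSpace ℝ (Fin n) | fstar u ≠ ⊤} ∧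
    Convex ℝ {u : EuclideanSpace ℝ (Fin n) | fstar u ≠ ⊤} :=
  stmt_17_general n f hnebot hproper hpoly fstar hfstar
end

section
/- (Marginal prices bound the range of α-scalings.) Let S : ℝⁿ → ℝ ∪ {+∞} be convex lsc with S(0) = 0, S' the greatest lsc sublinear minorant of S and S^∞ its horizon function. Then for every α > 0 and every x ∈ ℝⁿ: S'(x) ≤ (α⋆S)(x) ≤ S^∞(x), where (α⋆S)(x) = αS(x/α); consequently for the deterministic hedgeable-claims sets, αC(S,D) = C(α⋆S, αD) ⊆ C(S', D') and C(S^∞, D^∞) ⊆ αC(S,D) for all α > 0, where D is closed convex with 0 ∈ D, D' = cl ⋃_{α>0} αD and D^∞ = ⋂_{α>0} αD. -/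
open scoped Pointwise

/-!
Scaling a strategy `x` by `α > 0` scales its trades `Δxₜ` by `α`, so the constraint
`Sₜ(Δxₜ) + cₜ ≤ 0` becomes `(α⋆Sₜ)(αΔxₜ) + αcₜ ≤ 0`; this gives `α C(S,D) ⊆ C(α⋆S, αD)`, and the
same inclusion for `α⁻¹` gives the reverse one. Since `S'` is the lsc hull of the infimum of the
scalings, hence below it, and `S^∞` is their supremum, `S' ≤ α⋆S ≤ S^∞`, while `αD ⊆ D'` and `D^∞ ⊆ αD`; the two
inclusions of hedge sets then follow because `C(S,D)` is antitone in `S` and monotone in `D`.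
-/

theorem Filter.liminf_nhds_le_self {X β : Type*} [TopologicalSpace X] [CompleteLattice β]
    (f : X → β) (x : X) : Filter.liminf f (nhds x) ≤ f x :=
  Filter.liminf_le_of_frequently_le' <|
    (Filter.frequently_pure.2 le_rfl : ∃ᶠ y in pure x, f y ≤ f x).filter_mono (pure_le_nhds x)

theorem EReal.coe_mul_add_coe_mul_nonpos {a : ℝ} (ha : 0 ≤ a) {s : EReal} {c : ℝ}
    (h : s + c ≤ 0) : (a : EReal) * s + ((a * c : ℝ) : EReal) ≤ 0 :=
  calc (a : EReal) * s + ((a * c : ℝ) : EReal) = a * (s + c) := by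
        rw [EReal.left_distrib_of_nonneg_of_ne_top (EReal.coe_nonneg.2 ha) (EReal.coe_ne_top a),
          EReal.coe_mul]
    _ ≤ a * 0 := mul_le_mul_of_nonneg_left h (EReal.coe_nonneg.2 ha)
    _ = 0 := mul_zero _

section Hedging

variable {n T : ℕ}

/-- The paper's `α ⋆ S` (Rockafellar's right scalar multiplication), at each time `t`. -/
noncomputable def scaleCost (α : ℝ) (S : Fin (T+1) → EuclideanSpace ℝ (Fin n) → EReal) :
    Fin (T+1) → EuclideanSpace ℝ (Fin n) → EReal :=
  fun t x => (α : EReal) * S t (α⁻¹ • x)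

theorem scaleCost_inv_scaleCost {α : ℝ} (hα : α ≠ 0)
    (S : Fin (T+1) → EuclideanSpace ℝ (Fin n) → EReal) :
    scaleCost α⁻¹ (scaleCost α S) = S := by
  funext t x
  simp only [scaleCost, inv_inv, inv_smul_smul₀ hα, ← mul_assoc, ← EReal.coe_mul,
    inv_mul_cancel₀ hα, EReal.coe_one, one_mul]

theorem hedgeSet_mono {S₁ S₂ : Fin (T+1) → EuclideanSpace ℝ (Fin n) → EReal}
    {D₁ D₂ : Fin (T+1) → Set (EuclideanSpace ℝ (Fin n))}
    (hS : ∀ t x, S₂ t x ≤ S₁ t x) (hD : ∀ t, D₁ t ⊆ D₂ t) :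
    hedgeSet S₁ D₁ ⊆ hedgeSet S₂ D₂ := by
  rintro c ⟨x, hxT, hx⟩
  exact ⟨x, hxT, fun t => ⟨hD t (hx t).1, (add_le_add_left (hS t _) _).trans (hx t).2⟩⟩

theorem smul_hedgeSet_subset {α : ℝ} (hα : 0 < α)
    (S : Fin (T+1) → EuclideanSpace ℝ (Fin n) → EReal)
    (D : Fin (T+1) → Set (EuclideanSpace ℝ (Fin n))) :
    α • hedgeSet S D ⊆ hedgeSet (scaleCost α S) (fun t => α • D t) := by
  rintro _ ⟨c, ⟨x, hxT, hx⟩, rfl⟩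
  refine ⟨fun k => α • x k, by simp [hxT], fun t => ⟨Set.smul_mem_smul_set (hx t).1, ?_⟩⟩
  have htrade : α • x t - (if (t : ℕ) = 0 then 0 else α • x ((t : ℕ) - 1)) =
      α • (x t - (if (t : ℕ) = 0 then 0 else x ((t : ℕ) - 1))) := by
    rw [smul_sub, smul_ite, smul_zero]
  simp only [scaleCost, htrade, inv_smul_smul₀ hα.ne', Pi.smul_apply, smul_eq_mul]
  exact EReal.coe_mul_add_coe_mul_nonpos hα.le (hx t).2

theorem smul_hedgeSet {α : ℝ} (hα : 0 < α)
    (S : Fin (T+1) → EuclideanSpace ℝ (Fin n) → EReal)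
    (D : Fin (T+1) → Set (EuclideanSpace ℝ (Fin n))) :
    α • hedgeSet S D = hedgeSet (scaleCost α S) (fun t => α • D t) := by
  refine (smul_hedgeSet_subset hα S D).antisymm ((Set.subset_smul_set_iff₀ hα.ne').2 ?_)
  simpa only [scaleCost_inv_scaleCost hα.ne', inv_smul_smul₀ hα.ne'] using
    smul_hedgeSet_subset (inv_pos.2 hα) (scaleCost α S) (fun t => α • D t)

end Hedging

theorem stmt_19_general (n T : ℕ)
    (S : Fin (T+1) → EuclideanSpace ℝ (Fin n) → EReal)
    (D : Fin (T+1) → Set (EuclideanSpace ℝ (Fin n)))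
    (S' Sinf : Fin (T+1) → EuclideanSpace ℝ (Fin n) → EReal)
    (hS' : ∀ t x, S' t x = Filter.liminf
      (fun x' : EuclideanSpace ℝ (Fin n) =>
        ⨅ α : Set.Ioi (0:ℝ), ((α : ℝ) : EReal) * S t (((α : ℝ))⁻¹ • x')) (nhds x))
    (hSinf : ∀ t x, Sinf t x =
      ⨆ α : Set.Ioi (0:ℝ), ((α : ℝ) : EReal) * S t (((α : ℝ))⁻¹ • x))
    (D' Dinf : Fin (T+1) → Set (EuclideanSpace ℝ (Fin n)))
    (hD' : ∀ t, D' t = closure (⋃ α ∈ Set.Ioi (0:ℝ), α • D t))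
    (hDinf : ∀ t, Dinf t = ⋂ α ∈ Set.Ioi (0:ℝ), α • D t) :
    (∀ t, ∀ x : EuclideanSpace ℝ (Fin n), ∀ α : ℝ, 0 < α →
      S' t x ≤ (α : EReal) * S t (α⁻¹ • x) ∧
      (α : EReal) * S t (α⁻¹ • x) ≤ Sinf t x) ∧
    (∀ α : ℝ, 0 < α →
      α • hedgeSet S D =
          hedgeSet (fun t x => (α : EReal) * S t (α⁻¹ • x)) (fun t => α • D t) ∧
      α • hedgeSet S D ⊆ hedgeSet S' D' ∧
      hedgeSet Sinf Dinf ⊆ α • hedgeSet S D) := by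
  have hbounds : ∀ t x (α : ℝ), 0 < α →
      S' t x ≤ scaleCost α S t x ∧ scaleCost α S t x ≤ Sinf t x := fun t x α hα =>
    ⟨hS' t x ▸ (Filter.liminf_nhds_le_self _ x).trans (iInf_le_of_le ⟨α, hα⟩ le_rfl),
      hSinf t x ▸ le_iSup_of_le (⟨α, hα⟩ : Set.Ioi (0:ℝ)) le_rfl⟩
  refine ⟨hbounds, fun α hα => ⟨smul_hedgeSet hα S D, ?_, ?_⟩⟩
  · rw [smul_hedgeSet hα]
    refine hedgeSet_mono (fun t x => (hbounds t x α hα).1) fun t => ?_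
    rw [hD' t]
    exact (Set.subset_biUnion_of_mem (u := fun β => β • D t) hα).trans subset_closure
  · rw [smul_hedgeSet hα]
    refine hedgeSet_mono (fun t x => (hbounds t x α hα).2) fun t => ?_
    rw [hDinf t]
    exact Set.biInter_subset_of_mem hα

/-- For convex lsc costs `Sₜ` (vanishing at `0`) with lsc sublinear hull
`S'` and horizon functions `S^∞`, every scaling satisfies `S' ≤ α⋆S ≤ S^∞`; consequently
`α C(S,D) = C(α⋆S, αD) ⊆ C(S',D')` and `C(S^∞,D^∞) ⊆ α C(S,D)` for all `α > 0`, where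
`D' = cl ⋃_{α>0} αD` and `D^∞ = ⋂_{α>0} αD`. -/
theorem stmt_19 (n T : ℕ)
    (S : Fin (T+1) → EuclideanSpace ℝ (Fin n) → EReal)
    (D : Fin (T+1) → Set (EuclideanSpace ℝ (Fin n)))
    (hconv : ∀ t, ∀ x y : EuclideanSpace ℝ (Fin n), ∀ a b : ℝ, 0 ≤ a → 0 ≤ b → a + b = 1 →
      S t (a • x + b • y) ≤ (a : EReal) * S t x + (b : EReal) * S t y)
    (hlsc : ∀ t, LowerSemicontinuous (S t))
    (hS0 : ∀ t, S t 0 = 0) (hnebot : ∀ t x, S t x ≠ ⊥)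
    (hDcl : ∀ t, IsClosed (D t)) (hDconv : ∀ t, Convex ℝ (D t))
    (hD0 : ∀ t, (0 : EuclideanSpace ℝ (Fin n)) ∈ D t)
    (S' Sinf : Fin (T+1) → EuclideanSpace ℝ (Fin n) → EReal)
    (hS' : ∀ t x, S' t x = Filter.liminf
      (fun x' : EuclideanSpace ℝ (Fin n) =>
        ⨅ α : Set.Ioi (0:ℝ), ((α : ℝ) : EReal) * S t (((α : ℝ))⁻¹ • x')) (nhds x))
    (hSinf : ∀ t x, Sinf t x =
      ⨆ α : Set.Ioi (0:ℝ), ((α : ℝ) : EReal) * S t (((α : ℝ))⁻¹ • x))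
    (D' Dinf : Fin (T+1) → Set (EuclideanSpace ℝ (Fin n)))
    (hD' : ∀ t, D' t = closure (⋃ α ∈ Set.Ioi (0:ℝ), α • D t))
    (hDinf : ∀ t, Dinf t = ⋂ α ∈ Set.Ioi (0:ℝ), α • D t) :
    (∀ t, ∀ x : EuclideanSpace ℝ (Fin n), ∀ α : ℝ, 0 < α →
      S' t x ≤ (α : EReal) * S t (α⁻¹ • x) ∧
      (α : EReal) * S t (α⁻¹ • x) ≤ Sinf t x) ∧
    (∀ α : ℝ, 0 < α →
      α • hedgeSet S D =
          hedgeSet (fun t x => (α : EReal) * S t (α⁻¹ • x)) (fun t => α • D t) ∧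
      α • hedgeSet S D ⊆ hedgeSet S' D' ∧
      hedgeSet Sinf Dinf ⊆ α • hedgeSet S D) :=
  stmt_19_general n T S D S' Sinf hS' hSinf D' Dinf hD' hDinf
end
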